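/- arXiv:1704.03787 — 8 statements merged into one kernel-verified Lean document; each statement's English description precedes it below -/
import Mathlib

section
/- Let σ be an automorphism of G(V). Then for every vertex W of G(V), dim σ(W) = dim W; that is, σ sends each k-dimensional nontrivial proper subspace of V to a subspace of the same dimension k, for every 1 ≤ k ≤ n−1. -/
/-- The subspace sum graph: vertices are the nontrivial proper subspaces of `V`,
two distinct vertices being adjacent iff their sum is `V`. -/
def sumGraph (F V : Type*) [Field F] [AddCommGroup V] [Module F V] :
    SimpleGraph {W : Submodule F V // W ≠ ⊥ ∧ W ≠ ⊤} where
  Adj W₁ W₂ := W₁ ≠ W₂ ∧ W₁.1 ⊔ W₂.1 = ⊤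
  symm := ⟨fun a b h => ⟨h.1.symm, by rw [sup_comm]; exact h.2⟩⟩
  loopless := ⟨fun a h => h.1 rfl⟩

/-!
The degree of a vertex `W` of `G(V)` is a strictly increasing function of `dim W`: if `W₁ < W₂`,
every neighbour of `W₁` is a neighbour of `W₂`, while a complement of `W₂` is a neighbour of
`W₂` but not of `W₁`; and a linear automorphism of `V`, which acts on `G(V)` by graph
automorphisms, moves any `W₁` with `dim W₁ < dim W₂` strictly inside `W₂`. Since graph
automorphisms preserve degrees, they preserve dimensions.
-/

open Module Submodule SimpleGraph

theorem SimpleGraph.Iso.ncard_neighborSet {α β : Type*} {G : SimpleGraph α} {G' : SimpleGraph β}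
    (f : G ≃g G') (v : α) : (G'.neighborSet (f v)).ncard = (G.neighborSet v).ncard := by
  simp only [← Nat.card_coe_set_eq]
  exact (Nat.card_congr (f.mapNeighborSet v)).symm

section

variable {F V : Type*} [Field F] [AddCommGroup V] [Module F V]

def sumGraphIsoOfOrderIso (φ : Submodule F V ≃o Submodule F V) :
    sumGraph F V ≃g sumGraph F V where
  toEquiv := φ.toEquiv.subtypeEquiv fun W => by simp
  map_rel_iff' {W₁ W₂} := by
    change (_ ≠ _ ∧ φ W₁.1 ⊔ φ W₂.1 = ⊤) ↔ (W₁ ≠ W₂ ∧ W₁.1 ⊔ W₂.1 = ⊤)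
    rw [← φ.map_sup, map_eq_top_iff, (Equiv.injective _).ne_iff]

theorem sumGraph_neighborSet_ssubset_of_lt {W₁ W₂ : {W : Submodule F V // W ≠ ⊥ ∧ W ≠ ⊤}}
    (h : W₁.1 < W₂.1) : (sumGraph F V).neighborSet W₁ ⊂ (sumGraph F V).neighborSet W₂ := by
  have hsub : (sumGraph F V).neighborSet W₁ ⊆ (sumGraph F V).neighborSet W₂ := by
    rintro U ⟨-, hU⟩
    refine ⟨?_, top_unique (hU.symm.trans_le (sup_le_sup_right h.le U.1))⟩
    rintro rfl
    exact W₂.2.2 (by rwa [sup_eq_right.2 h.le] at hU)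
  refine (Set.ssubset_iff_of_subset hsub).2 ?_
  obtain ⟨C, hC⟩ := W₂.1.exists_isCompl
  have hC_bot : C ≠ ⊥ := fun hb => W₂.2.2 (by simpa [hb] using hC.sup_eq_top)
  have hC_top : C ≠ ⊤ := fun ht => W₂.2.1 (by simpa [ht] using hC.inf_eq_bot)
  refine ⟨⟨C, hC_bot, hC_top⟩, ⟨fun he => W₂.2.1 ?_, hC.sup_eq_top⟩, fun ⟨_, hsup⟩ => h.ne ?_⟩
  · simpa [congrArg Subtype.val he] using hC.inf_eq_bot
  · -- modular law: `W₂ = (W₁ ⊔ C) ⊓ W₂ = W₁ ⊔ (C ⊓ W₂) = W₁`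
    simpa [hsup, hC.symm.inf_eq_bot] using (sup_inf_assoc_of_le C h.le).symm

theorem exists_linearEquiv_map_lt_of_finrank_lt [FiniteDimensional F V] {W₁ W₂ : Submodule F V}
    (h : finrank F W₁ < finrank F W₂) : ∃ e : V ≃ₗ[F] V, W₁.map (e : V →ₗ[F] V) < W₂ := by
  obtain ⟨f, hf⟩ := (finrank_le_iff_exists_linearMap (R := F)).1 h.le
  have hg : Function.Injective (W₂.subtype ∘ₗ f) := W₂.injective_subtype.comp hf
  obtain ⟨e, he⟩ := Submodule.exists_linearEquiv_restrict_eq (LinearEquiv.ofInjective _ hg)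
  refine ⟨e, lt_of_le_of_ne ?_ fun heq => h.ne ?_⟩
  · rintro _ ⟨x, hx, rfl⟩
    simp [← he ⟨x, hx⟩]
  · rw [← heq, LinearEquiv.finrank_map_eq]

theorem ncard_neighborSet_lt_of_finrank_lt [Finite F] [FiniteDimensional F V]
    {W₁ W₂ : {W : Submodule F V // W ≠ ⊥ ∧ W ≠ ⊤}} (h : finrank F W₁.1 < finrank F W₂.1) :
    ((sumGraph F V).neighborSet W₁).ncard < ((sumGraph F V).neighborSet W₂).ncard := by
  have : Finite V := Module.finite_of_finite F
  have : Finite (Submodule F V) := Finite.of_injective _ SetLike.coe_injective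
  obtain ⟨e, he⟩ := exists_linearEquiv_map_lt_of_finrank_lt h
  rw [← (sumGraphIsoOfOrderIso (orderIsoMapComap e)).ncard_neighborSet W₁]
  exact Set.ncard_lt_ncard (sumGraph_neighborSet_ssubset_of_lt he)

end

theorem stmt_2_general (F V : Type*) [Field F] [Fintype F] [AddCommGroup V] [Module F V]
    [FiniteDimensional F V]
    (σ : sumGraph F V ≃g sumGraph F V) :
    ∀ W : {W : Submodule F V // W ≠ ⊥ ∧ W ≠ ⊤},
      Module.finrank F (σ W).1 = Module.finrank F W.1 := by
  intro W
  have hdeg := σ.ncard_neighborSet W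
  by_contra hne
  rcases Nat.lt_or_gt_of_ne hne with h | h
  · exact (ncard_neighborSet_lt_of_finrank_lt h).ne hdeg
  · exact (ncard_neighborSet_lt_of_finrank_lt h).ne' hdeg

/-- an automorphism of `G(V)` preserves the dimension of every vertex. -/
theorem stmt_2 (F V : Type*) [Field F] [Fintype F] [AddCommGroup V] [Module F V]
    [FiniteDimensional F V] (n : ℕ) (hn : 3 ≤ n) (hdim : Module.finrank F V = n)
    (σ : sumGraph F V ≃g sumGraph F V) :
    ∀ W : {W : Submodule F V // W ≠ ⊥ ∧ W ≠ ⊤},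
      Module.finrank F (σ W).1 = Module.finrank F W.1 :=
  stmt_2_general F V σ
end

section
/- Let σ be an automorphism of G(V), let W be a k-dimensional subspace of V with 2 ≤ k ≤ n−1, let {α₁, …, α_k} be a basis of W, and suppose σ(⟨α_i⟩) = ⟨β_i⟩ for 1 ≤ i ≤ k, where ⟨v⟩ denotes the 1-dimensional subspace spanned by a nonzero vector v. Then ⟨β_i⟩ ⊆ σ(W) for every 1 ≤ i ≤ k. -/
/-! Inclusion of subspaces is visible in the sum graph: a vertex `A` lies in `B` iff `A` and `B`
are not adjacent and every neighbour of `A` is `B` or a neighbour of `B`. Graph automorphisms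
therefore preserve inclusion, and `⟨βᵢ⟩ = σ⟨αᵢ⟩ ≤ σ W` follows from `⟨αᵢ⟩ ≤ W`. -/

/-- The witness is `b ⊔ u` for a complement `u` of `a ⊔ b`; modularity gives
`(b ⊔ u) ⊓ (a ⊔ b) = b`, so it is proper. -/
theorem exists_lt_ne_top_sup_eq_top {α : Type*} [Lattice α] [BoundedOrder α]
    [IsModularLattice α] [ComplementedLattice α] {a b : α} (hab : ¬a ≤ b) (hsup : a ⊔ b ≠ ⊤) :
    ∃ h, b < h ∧ h ≠ ⊤ ∧ a ⊔ h = ⊤ := by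
  obtain ⟨u, hu⟩ := exists_isCompl (a ⊔ b)
  have ha_sup : a ⊔ (b ⊔ u) = ⊤ := by rw [← sup_assoc, hu.sup_eq_top]
  have hmeet : (b ⊔ u) ⊓ (a ⊔ b) = b := by
    rw [sup_inf_assoc_of_le u le_sup_right, hu.symm.inf_eq_bot, sup_bot_eq]
  refine ⟨b ⊔ u, lt_of_le_of_ne le_sup_left ?_, ?_, ha_sup⟩
  · intro hb
    rw [← hb] at ha_sup
    exact hsup ha_sup
  · intro htop
    rw [htop, top_inf_eq] at hmeet
    exact hab (hmeet ▸ le_sup_left)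

namespace sumGraph

variable {F V : Type*} [Field F] [AddCommGroup V] [Module F V]

theorem le_iff_forall_adj (A B : {W : Submodule F V // W ≠ ⊥ ∧ W ≠ ⊤}) :
    A.1 ≤ B.1 ↔ ¬(sumGraph F V).Adj A B ∧
      ∀ Z, (sumGraph F V).Adj A Z → (sumGraph F V).Adj B Z ∨ Z = B := by
  constructor
  · intro hAB
    refine ⟨fun hadj => B.2.2 ?_, fun Z hAZ => ?_⟩
    · rw [← sup_eq_right.mpr hAB]
      exact hadj.2
    · by_cases hZB : Z = B
      · exact Or.inr hZB
      · exact Or.inl ⟨Ne.symm hZB, top_unique (hAZ.2.ge.trans (sup_le_sup_right hAB _))⟩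
  · rintro ⟨hnadj, hnbhd⟩
    by_contra hAB
    have hsup : A.1 ⊔ B.1 ≠ ⊤ := fun htop =>
      hnadj ⟨fun hAB' => hAB (hAB' ▸ le_rfl), htop⟩
    obtain ⟨h, hBh, hh_top, hAh⟩ := exists_lt_ne_top_sup_eq_top hAB hsup
    let H : {W : Submodule F V // W ≠ ⊥ ∧ W ≠ ⊤} :=
      ⟨h, ne_bot_of_gt ((bot_lt_iff_ne_bot.mpr B.2.1).trans hBh), hh_top⟩
    have hAH : (sumGraph F V).Adj A H :=
      ⟨fun hAH' => hh_top (by rwa [show A.1 = h from congrArg Subtype.val hAH', sup_idem] at hAh),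
        hAh⟩
    rcases hnbhd H hAH with hBH | hHB
    · exact hh_top (by rw [← hBH.2, sup_eq_right.mpr hBh.le])
    · exact hBh.ne (congrArg Subtype.val hHB).symm

theorem iso_apply_le_apply_iff (σ : sumGraph F V ≃g sumGraph F V)
    (A B : {W : Submodule F V // W ≠ ⊥ ∧ W ≠ ⊤}) : (σ A).1 ≤ (σ B).1 ↔ A.1 ≤ B.1 := by
  rw [le_iff_forall_adj, le_iff_forall_adj, σ.map_adj_iff, σ.surjective.forall]
  simp only [σ.map_adj_iff, σ.injective.eq_iff]

end sumGraph

theorem stmt_3_general (F V : Type*) [Field F] [AddCommGroup V] [Module F V]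
    (σ : sumGraph F V ≃g sumGraph F V)
    (k : ℕ)
    (W : Submodule F V)
    (α β : Fin k → V)
    (hli : LinearIndependent F α) (hspan : Submodule.span F (Set.range α) = W)
    (hσ : ∀ (i : Fin k) (h : Submodule.span F {α i} ≠ ⊥ ∧ Submodule.span F {α i} ≠ ⊤),
      (σ ⟨Submodule.span F {α i}, h⟩).1 = Submodule.span F {β i}) :
    ∀ (i : Fin k) (hWv : W ≠ ⊥ ∧ W ≠ ⊤),
      Submodule.span F {β i} ≤ (σ ⟨W, hWv⟩).1 := by
  intro i hWv
  have hLW : Submodule.span F {α i} ≤ W :=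
    hspan ▸ Submodule.span_mono (Set.singleton_subset_iff.mpr ⟨i, rfl⟩)
  have hL : Submodule.span F {α i} ≠ ⊥ ∧ Submodule.span F {α i} ≠ ⊤ :=
    ⟨by simpa [Submodule.span_singleton_eq_bot] using hli.ne_zero i,
      fun htop => hWv.2 (top_unique (htop ▸ hLW))⟩
  rw [← hσ i hL]
  exact (sumGraph.iso_apply_le_apply_iff σ ⟨_, hL⟩ ⟨W, hWv⟩).mpr hLW

/-- if `σ` is an automorphism of `G(V)`, `W` is `k`-dimensional with
basis `α₁, …, α_k` (`2 ≤ k ≤ n-1`) and `σ⟨αᵢ⟩ = ⟨βᵢ⟩`, then `⟨βᵢ⟩ ⊆ σ(W)` for all `i`. -/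
theorem stmt_3 (F V : Type*) [Field F] [Fintype F] [AddCommGroup V] [Module F V]
    [FiniteDimensional F V] (n : ℕ) (hn : 3 ≤ n) (hdim : Module.finrank F V = n)
    (σ : sumGraph F V ≃g sumGraph F V)
    (k : ℕ) (hk1 : 2 ≤ k) (hk2 : k ≤ n - 1)
    (W : Submodule F V) (hW : Module.finrank F W = k)
    (α β : Fin k → V)
    (hli : LinearIndependent F α) (hspan : Submodule.span F (Set.range α) = W)
    (hσ : ∀ (i : Fin k) (h : Submodule.span F {α i} ≠ ⊥ ∧ Submodule.span F {α i} ≠ ⊤),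
      (σ ⟨Submodule.span F {α i}, h⟩).1 = Submodule.span F {β i}) :
    ∀ (i : Fin k) (hWv : W ≠ ⊥ ∧ W ≠ ⊤),
      Submodule.span F {β i} ≤ (σ ⟨W, hWv⟩).1 :=
  stmt_3_general F V σ k W α β hli hspan hσ
end

section
/- Let σ be an automorphism of G(V), let W be a k-dimensional subspace of V with 2 ≤ k ≤ n−1, and let α be a nonzero vector of V. If ⟨α⟩ is not contained in W, then σ(⟨α⟩) is not contained in σ(W), where ⟨α⟩ denotes the 1-dimensional subspace spanned by α. -/
theorem Submodule.exists_le_notMem_span_singleton_sup_eq_top {K V : Type*} [Field K]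
    [AddCommGroup V] [Module K V] {W : Submodule K V} {x : V} (hx : x ∉ W) :
    ∃ H : Submodule K V, W ≤ H ∧ x ∉ H ∧ K ∙ x ⊔ H = ⊤ := by
  obtain ⟨f, hfx, hfW⟩ := W.exists_dual_map_eq_bot_of_notMem hx inferInstance
  exact ⟨LinearMap.ker f, LinearMap.le_ker_iff_map.mpr hfW, hfx,
    LinearMap.span_singleton_sup_ker_eq_top f hfx⟩

namespace sumGraph

variable {F V : Type*} [Field F] [AddCommGroup V] [Module F V]
  {A B C : {W : Submodule F V // W ≠ ⊥ ∧ W ≠ ⊤}}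

theorem adj_iff : (sumGraph F V).Adj A B ↔ A.1 ⊔ B.1 = ⊤ := by
  refine ⟨And.right, fun h => ⟨?_, h⟩⟩
  rintro rfl
  exact A.2.2 (by rwa [sup_idem] at h)

theorem adj_of_le_of_adj (hAB : A.1 ≤ B.1) (hAC : (sumGraph F V).Adj A C) :
    (sumGraph F V).Adj B C :=
  adj_iff.mpr <| top_unique <| (adj_iff.mp hAC).ge.trans (sup_le_sup_right hAB _)

theorem not_adj_of_le (hAB : A.1 ≤ B.1) : ¬ (sumGraph F V).Adj A B := by
  rw [adj_iff, sup_eq_right.mpr hAB]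
  exact B.2.2

end sumGraph

theorem stmt_7_general (F V : Type*) [Field F] [AddCommGroup V] [Module F V]
    (σ : sumGraph F V ≃g sumGraph F V)
    (W : Submodule F V)
    (α : V) (hle : ¬ Submodule.span F {α} ≤ W) :
    ∀ (hαv : Submodule.span F {α} ≠ ⊥ ∧ Submodule.span F {α} ≠ ⊤)
      (hWv : W ≠ ⊥ ∧ W ≠ ⊤),
      ¬ (σ ⟨Submodule.span F {α}, hαv⟩).1 ≤ (σ ⟨W, hWv⟩).1 := by
  intro hαv hWv hσ
  rw [Submodule.span_singleton_le_iff_mem] at hle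
  obtain ⟨H, hWH, hαH, hsup⟩ := Submodule.exists_le_notMem_span_singleton_sup_eq_top hle
  have hHv : H ≠ ⊥ ∧ H ≠ ⊤ :=
    ⟨fun h => hWv.1 (le_bot_iff.mp (h ▸ hWH)), fun h => hαH (h ▸ Submodule.mem_top)⟩
  have hαH_adj : (sumGraph F V).Adj ⟨_, hαv⟩ ⟨H, hHv⟩ := sumGraph.adj_iff.mpr hsup
  have hWH_adj : (sumGraph F V).Adj (σ ⟨W, hWv⟩) (σ ⟨H, hHv⟩) :=
    sumGraph.adj_of_le_of_adj hσ (σ.map_adj_iff.mpr hαH_adj)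
  exact sumGraph.not_adj_of_le (B := ⟨H, hHv⟩) hWH (σ.map_adj_iff.mp hWH_adj)

/-- if `σ` is an automorphism of `G(V)`, `W` is a `k`-dimensional
subspace (`2 ≤ k ≤ n-1`), `α ≠ 0` and `⟨α⟩ ⊄ W`, then `σ(⟨α⟩) ⊄ σ(W)`. -/
theorem stmt_7 (F V : Type*) [Field F] [Fintype F] [AddCommGroup V] [Module F V]
    [FiniteDimensional F V] (n : ℕ) (hn : 3 ≤ n) (hdim : Module.finrank F V = n)
    (σ : sumGraph F V ≃g sumGraph F V)
    (k : ℕ) (hk1 : 2 ≤ k) (hk2 : k ≤ n - 1)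
    (W : Submodule F V) (hW : Module.finrank F W = k)
    (α : V) (hα : α ≠ 0) (hle : ¬ Submodule.span F {α} ≤ W) :
    ∀ (hαv : Submodule.span F {α} ≠ ⊥ ∧ Submodule.span F {α} ≠ ⊤)
      (hWv : W ≠ ⊥ ∧ W ≠ ⊤),
      ¬ (σ ⟨Submodule.span F {α}, hαv⟩).1 ≤ (σ ⟨W, hWv⟩).1 :=
  stmt_7_general F V σ W α hle
end

section
/- Let σ be an automorphism of G(V) such that σ(⟨e_i⟩) = ⟨e_i⟩ for every 1 ≤ i ≤ n. Let α = ∑_{i=1}^n a_i e_i and β = ∑_{i=1}^n b_i e_i be nonzero vectors of V with σ(⟨α⟩) = ⟨β⟩. Then for every 1 ≤ i ≤ n, a_i = 0 if and only if b_i = 0. -/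
/-!
The hyperplane `Hᵢ = ker eᵢ*` spanned by the `eⱼ` with `j ≠ i` is the only vertex of `G(V)` adjacent
to `⟨eᵢ⟩` and to no other `⟨eⱼ⟩`: a vertex adjacent to the line `⟨eᵢ⟩` is a hyperplane, and a
hyperplane is adjacent to exactly the vertices it does not contain. Since `σ` fixes every `⟨eⱼ⟩`,
it therefore fixes `Hᵢ`, and `aᵢ ≠ 0 ↔ ⟨α⟩ ~ Hᵢ ↔ ⟨β⟩ ~ Hᵢ ↔ bᵢ ≠ 0`.
-/

open Module Submodule

theorem IsAtom.isCoatom_of_sup_eq_top {α : Type*} [Lattice α] [BoundedOrder α]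
    [IsModularLattice α] {a b : α} (ha : IsAtom a) (hb : b ≠ ⊤) (hab : a ⊔ b = ⊤) :
    IsCoatom b := by
  have hinf : a ⊓ b = ⊥ :=
    disjoint_iff.1 <| ha.not_le_iff_disjoint.1 fun h => hb (by rwa [sup_eq_right.2 h] at hab)
  rw [← covBy_top_iff, ← hab]
  exact covBy_sup_of_inf_covBy_left (hinf ▸ bot_covBy_iff.2 ha)

namespace Module.Basis

variable {ι F V : Type*} [Field F] [AddCommGroup V] [Module F V] (e : Basis ι F V)

theorem isCoatom_ker_coord (i : ι) : IsCoatom (LinearMap.ker (e.coord i)) :=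
  LinearMap.isCoatom_ker_of_surjective fun c => ⟨c • e i, by simp⟩

theorem ker_coord_eq_span_image_compl (i : ι) :
    LinearMap.ker (e.coord i) = span F (e '' {i}ᶜ) := by
  ext v
  simp [e.mem_span_image, Set.subset_compl_singleton_iff]

theorem mem_ker_coord_of_ne {i j : ι} (hij : i ≠ j) : e j ∈ LinearMap.ker (e.coord i) := by
  simp [hij]

theorem ker_coord_ne_bot {i j : ι} (hij : i ≠ j) : LinearMap.ker (e.coord i) ≠ ⊥ :=
  fun h => e.ne_zero j (by simpa [h] using e.mem_ker_coord_of_ne hij)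

theorem span_singleton_ne_top (e : Basis ι F V) {i j : ι} (hij : i ≠ j) (v : V) :
    span F {v} ≠ ⊤ := by
  intro h
  obtain ⟨c, hc⟩ := mem_span_singleton.1 (h ▸ mem_top : e i ∈ span F {v})
  obtain ⟨d, hd⟩ := mem_span_singleton.1 (h ▸ mem_top : e j ∈ span F {v})
  have hc0 : c ≠ 0 := by rintro rfl; exact e.ne_zero i (by simp [← hc])
  have : e j ∈ span F (e '' {i}) := by
    rw [Set.image_singleton, mem_span_singleton]
    exact ⟨d * c⁻¹, by rw [← hc, ← hd, smul_smul, inv_mul_cancel_right₀ hc0]⟩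
  exact e.linearIndependent.notMem_span_image (show j ∉ ({i} : Set ι) from hij.symm) this

end Module.Basis

section sumGraph

variable {ι F V : Type*} [Field F] [AddCommGroup V] [Module F V]

theorem sumGraph_adj_iff_not_le_of_isCoatom {W H : {W : Submodule F V // W ≠ ⊥ ∧ W ≠ ⊤}}
    (hH : IsCoatom H.1) : (sumGraph F V).Adj W H ↔ ¬ W.1 ≤ H.1 := by
  refine ⟨fun ⟨_, hsup⟩ hle => hH.1 (by rwa [sup_eq_right.2 hle] at hsup), fun hle => ?_⟩
  exact ⟨by rintro rfl; exact hle le_rfl, hH.2 _ (right_lt_sup.2 hle)⟩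

theorem sumGraph_eq_ker_coord_of_adj (e : Basis ι F V) {i : ι}
    (E : ι → {W : Submodule F V // W ≠ ⊥ ∧ W ≠ ⊤}) (hE : ∀ k, (E k).1 = span F {e k})
    {U : {W : Submodule F V // W ≠ ⊥ ∧ W ≠ ⊤}} (hi : (sumGraph F V).Adj U (E i))
    (hj : ∀ j, j ≠ i → ¬ (sumGraph F V).Adj U (E j)) :
    U.1 = LinearMap.ker (e.coord i) := by
  have hU : IsCoatom U.1 := by
    refine (nonzero_span_atom (e i) (e.ne_zero i)).isCoatom_of_sup_eq_top U.2.2 ?_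
    rw [sup_comm, ← hE i]
    exact hi.2
  have hle : LinearMap.ker (e.coord i) ≤ U.1 := by
    rw [e.ker_coord_eq_span_image_compl, span_le]
    rintro _ ⟨j, hj', rfl⟩
    have := (sumGraph_adj_iff_not_le_of_isCoatom hU).not.1 fun h => hj j hj' h.symm
    rw [not_not, hE j, span_singleton_le_iff_mem] at this
    exact this
  exact ((e.isCoatom_ker_coord i).le_iff_eq U.2.2).1 hle

theorem sumGraph_adj_ker_coord_iff (e : Basis ι F V) {i : ι} {v : V}
    {W H : {W : Submodule F V // W ≠ ⊥ ∧ W ≠ ⊤}} (hW : W.1 = span F {v})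
    (hH : H.1 = LinearMap.ker (e.coord i)) :
    (sumGraph F V).Adj W H ↔ e.repr v i ≠ 0 := by
  rw [sumGraph_adj_iff_not_le_of_isCoatom (hH ▸ e.isCoatom_ker_coord i), hW, hH,
    span_singleton_le_iff_mem, LinearMap.mem_ker, e.coord_apply]

theorem sumGraph_iso_apply_eq_ker_coord (e : Basis ι F V) {i : ι} (σ : sumGraph F V ≃g sumGraph F V)
    (E : ι → {W : Submodule F V // W ≠ ⊥ ∧ W ≠ ⊤}) (hE : ∀ k, (E k).1 = span F {e k})
    (hσE : ∀ k, σ (E k) = E k) {H : {W : Submodule F V // W ≠ ⊥ ∧ W ≠ ⊤}}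
    (hH : H.1 = LinearMap.ker (e.coord i)) :
    (σ H).1 = LinearMap.ker (e.coord i) := by
  refine sumGraph_eq_ker_coord_of_adj e E hE ?_ fun j hj => ?_
  · rw [← hσE i, σ.map_adj_iff, SimpleGraph.adj_comm, sumGraph_adj_ker_coord_iff e (hE i) hH]
    simp
  · rw [← hσE j, σ.map_adj_iff, SimpleGraph.adj_comm, sumGraph_adj_ker_coord_iff e (hE j) hH]
    simp [hj]

end sumGraph

theorem stmt_9_general (F V : Type*) [Field F] [AddCommGroup V] [Module F V]
    (n : ℕ) (hn : 3 ≤ n)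
    (e : Module.Basis (Fin n) F V)
    (σ : sumGraph F V ≃g sumGraph F V)
    (hfix : ∀ (i : Fin n) (h : Submodule.span F {e i} ≠ ⊥ ∧ Submodule.span F {e i} ≠ ⊤),
      (σ ⟨Submodule.span F {e i}, h⟩).1 = Submodule.span F {e i})
    (a b : Fin n → F)
    (ha : (∑ i, a i • e i) ≠ 0)
    (hσ : ∀ (h : Submodule.span F {∑ i, a i • e i} ≠ ⊥ ∧
        Submodule.span F {∑ i, a i • e i} ≠ ⊤),
      (σ ⟨Submodule.span F {∑ i, a i • e i}, h⟩).1 =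
        Submodule.span F {∑ i, b i • e i}) :
    ∀ i : Fin n, a i = 0 ↔ b i = 0 := by
  intro i
  have : Nontrivial (Fin n) := Fin.nontrivial_iff_two_le.2 (by omega)
  obtain ⟨j, hji⟩ := exists_ne i
  have hline (v : V) (hv : v ≠ 0) : span F {v} ≠ ⊥ ∧ span F {v} ≠ ⊤ :=
    ⟨span_singleton_eq_bot.not.2 hv, e.span_singleton_ne_top hji v⟩
  let E (k : Fin n) : {W : Submodule F V // W ≠ ⊥ ∧ W ≠ ⊤} := ⟨span F {e k}, hline _ (e.ne_zero k)⟩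
  let H : {W : Submodule F V // W ≠ ⊥ ∧ W ≠ ⊤} :=
    ⟨LinearMap.ker (e.coord i), e.ker_coord_ne_bot hji.symm, (e.isCoatom_ker_coord i).1⟩
  let A : {W : Submodule F V // W ≠ ⊥ ∧ W ≠ ⊤} := ⟨span F {∑ i, a i • e i}, hline _ ha⟩
  have hσH : (σ H).1 = LinearMap.ker (e.coord i) :=
    sumGraph_iso_apply_eq_ker_coord e σ E (fun _ => rfl) (fun k => Subtype.ext (hfix k _)) rfl
  have hadj := σ.map_adj_iff (v := A) (w := H)
  rw [sumGraph_adj_ker_coord_iff e (hσ _) hσH, sumGraph_adj_ker_coord_iff e rfl rfl,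
    e.repr_sum_self, e.repr_sum_self] at hadj
  exact not_iff_not.1 hadj.symm

/-- Claim 1: if the automorphism `σ` fixes every `⟨eᵢ⟩` and
`σ(⟨∑ aᵢeᵢ⟩) = ⟨∑ bᵢeᵢ⟩` for nonzero vectors `∑ aᵢeᵢ`, `∑ bᵢeᵢ`,
then `aᵢ = 0 ↔ bᵢ = 0` for every `i`. -/
theorem stmt_9 (F V : Type*) [Field F] [Fintype F] [AddCommGroup V] [Module F V]
    [FiniteDimensional F V] (n : ℕ) (hn : 3 ≤ n) (hdim : Module.finrank F V = n)
    (e : Module.Basis (Fin n) F V)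
    (σ : sumGraph F V ≃g sumGraph F V)
    (hfix : ∀ (i : Fin n) (h : Submodule.span F {e i} ≠ ⊥ ∧ Submodule.span F {e i} ≠ ⊤),
      (σ ⟨Submodule.span F {e i}, h⟩).1 = Submodule.span F {e i})
    (a b : Fin n → F)
    (ha : (∑ i, a i • e i) ≠ 0) (hb : (∑ i, b i • e i) ≠ 0)
    (hσ : ∀ (h : Submodule.span F {∑ i, a i • e i} ≠ ⊥ ∧
        Submodule.span F {∑ i, a i • e i} ≠ ⊤),
      (σ ⟨Submodule.span F {∑ i, a i • e i}, h⟩).1 =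
        Submodule.span F {∑ i, b i • e i}) :
    ∀ i : Fin n, a i = 0 ↔ b i = 0 :=
  stmt_9_general F V n hn e σ hfix a b ha hσ
end

section
/- Let σ be an automorphism of G(V) such that σ(⟨e_i⟩) = ⟨e_i⟩ for every 1 ≤ i ≤ n. Then there exist functions f_{ij} : F_q → F_q for all 1 ≤ i < j ≤ n, satisfying f_{ij}(a) = 0 if and only if a = 0, such that for every 1 ≤ i ≤ n and all scalars a_{i+1}, …, a_n ∈ F_q, σ(⟨e_i + ∑_{j=i+1}^n a_j e_j⟩) = ⟨e_i + ∑_{j=i+1}^n f_{ij}(a_j) e_j⟩. -/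
/-!
An automorphism `σ` of the subspace sum graph preserves inclusion: `W ≤ W'` iff every neighbour
of `W` is a neighbour of `W'`, because a hyperplane through `W'` that misses a vector of `W \ W'`
is a neighbour of `W` but not of `W'`. So `σ` maps lines to lines and hyperplanes to hyperplanes.
If `σ` fixes every `⟨e_k⟩`, it maps the hyperplane `{x_j = a x_i}`, which contains `e_k` for
`k ≠ i, j` but not `e_j`, to another such hyperplane `{x_j = f_{ij}(a) x_i}`, and `f_{ij}(a) = 0`
iff `e_i` lies in it, i.e. iff `a = 0`. A line `⟨v⟩` with `v_i = 1` lies in `{x_j = v_j x_i}`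
for every `j ≠ i`, so its image `⟨w⟩` satisfies `w_j = f_{ij}(v_j) w_i`, and `w_i ≠ 0`.
-/

open Module Submodule

section BoundedOrder

variable {α : Type*} [PartialOrder α] [BoundedOrder α] {x : {a : α // a ≠ ⊥ ∧ a ≠ ⊤}}

lemma isMin_iff_isAtom_val : IsMin x ↔ IsAtom x.1 := by
  refine ⟨fun h => ⟨x.2.1, fun a ha => ?_⟩, fun h y hy => ?_⟩
  · by_contra ha0
    exact ha.not_ge (h (b := ⟨a, ha0, ha.ne_top⟩) ha.le)
  · exact ((h.le_iff.mp hy).resolve_left y.2.1).ge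

lemma isMax_iff_isCoatom_val : IsMax x ↔ IsCoatom x.1 := by
  refine ⟨fun h => ⟨x.2.2, fun a ha => ?_⟩, fun h y hy => ?_⟩
  · by_contra ha0
    exact ha.not_ge (h (b := ⟨a, ha.ne_bot, ha0⟩) ha.le)
  · exact ((h.le_iff.mp hy).resolve_left y.2.2).le

end BoundedOrder

section Field

variable {F V : Type*} [Field F] [AddCommGroup V] [Module F V]

lemma isCoatom_ker_of_apply_ne_zero {φ : V →ₗ[F] F} {v : V} (hv : φ v ≠ 0) :
    IsCoatom (LinearMap.ker φ) :=
  LinearMap.isCoatom_ker_of_surjective fun c => ⟨(c / φ v) • v, by simp [hv]⟩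

section Pencil

variable {ι : Type*} (e : Basis ι F V)

noncomputable def pencilHyperplane (i j : ι) (b : F) : Submodule F V :=
  LinearMap.ker (e.coord j - b • e.coord i)

variable {e}

lemma mem_pencilHyperplane {i j : ι} {b : F} {x : V} :
    x ∈ pencilHyperplane e i j b ↔ e.repr x j = b * e.repr x i := by
  simp [pencilHyperplane, sub_eq_zero]

lemma basis_mem_pencilHyperplane_of_ne {i j k : ι} (b : F) (hki : k ≠ i) (hkj : k ≠ j) :
    e k ∈ pencilHyperplane e i j b := by
  simp [mem_pencilHyperplane, Ne.symm hki, Ne.symm hkj]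

lemma basis_notMem_pencilHyperplane {i j : ι} (b : F) (hij : i ≠ j) :
    e j ∉ pencilHyperplane e i j b := by
  simp [mem_pencilHyperplane, hij]

lemma basis_mem_pencilHyperplane_iff {i j : ι} {b : F} (hij : i ≠ j) :
    e i ∈ pencilHyperplane e i j b ↔ b = 0 := by
  simp [mem_pencilHyperplane, Ne.symm hij, eq_comm]

lemma pencilHyperplane_ne_bot {i j : ι} (b : F) (hij : i ≠ j) :
    pencilHyperplane e i j b ≠ ⊥ := by
  refine (Submodule.ne_bot_iff _).2 ⟨e i + b • e j, ?_, fun h => ?_⟩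
  · simp [mem_pencilHyperplane, hij, Ne.symm hij]
  · simpa [hij] using congr(e.repr $h i)

lemma isCoatom_pencilHyperplane {i j : ι} (b : F) (hij : i ≠ j) :
    IsCoatom (pencilHyperplane e i j b) := by
  exact isCoatom_ker_of_apply_ne_zero (v := e j) (by simp [hij])

lemma ker_eq_pencilHyperplane {φ : V →ₗ[F] F} {i j : ι} (hij : i ≠ j) (hj : φ (e j) ≠ 0)
    (hk : ∀ k, k ≠ i → k ≠ j → φ (e k) = 0) :
    LinearMap.ker φ = pencilHyperplane e i j (-(φ (e i) / φ (e j))) := by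
  have hφ : φ = φ (e j) • (e.coord j - (-(φ (e i) / φ (e j))) • e.coord i) := by
    refine e.ext fun k => ?_
    by_cases hki : k = i
    · subst hki; simp [Ne.symm hij, mul_div_cancel₀ _ hj]
    by_cases hkj : k = j
    · subst hkj; simp [hki]
    · simp [hk k hki hkj, Ne.symm hki, Ne.symm hkj]
  rw [pencilHyperplane, ← LinearMap.ker_smul (e.coord j - _ • e.coord i) _ hj, ← hφ]

lemma IsCoatom.exists_eq_pencilHyperplane {H : Submodule F V} (hH : IsCoatom H) {i j : ι}
    (hij : i ≠ j) (hk : ∀ k, k ≠ i → k ≠ j → e k ∈ H) (hj : e j ∉ H) :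
    ∃ b, H = pencilHyperplane e i j b := by
  obtain ⟨φ, hφj, hHφ⟩ := H.exists_le_ker_of_notMem hj
  have hH_eq : H = LinearMap.ker φ :=
    ((hH.le_iff.mp hHφ).resolve_left (isCoatom_ker_of_apply_ne_zero hφj).1).symm
  exact ⟨_, hH_eq.trans (ker_eq_pencilHyperplane hij hφj fun k hki hkj => hHφ (hk k hki hkj))⟩

end Pencil

lemma sumGraph_adj_iff {W U : {W : Submodule F V // W ≠ ⊥ ∧ W ≠ ⊤}} :
    (sumGraph F V).Adj W U ↔ W.1 ⊔ U.1 = ⊤ :=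
  ⟨And.right, fun h => ⟨fun hWU => W.2.2 (by rwa [← hWU, sup_idem] at h), h⟩⟩

lemma sumGraph_le_iff_forall_adj {W W' : {W : Submodule F V // W ≠ ⊥ ∧ W ≠ ⊤}} :
    W.1 ≤ W'.1 ↔ ∀ U, (sumGraph F V).Adj W U → (sumGraph F V).Adj W' U := by
  simp only [sumGraph_adj_iff]
  refine ⟨fun h U hU => eq_top_mono (sup_le_sup_right h U.1) hU, fun h => ?_⟩
  by_contra hWW'
  obtain ⟨w, hwW, hwW'⟩ := SetLike.not_le_iff_exists.mp hWW'
  obtain ⟨φ, hφw, hW'φ⟩ := W'.1.exists_le_ker_of_notMem hwW'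
  have hφ := isCoatom_ker_of_apply_ne_zero hφw
  have hWφ : W.1 ⊔ LinearMap.ker φ = ⊤ := by
    rw [sup_comm]
    exact hφ.lt_iff.mp (left_lt_sup.mpr fun hle => hφw (hle hwW))
  have := h ⟨LinearMap.ker φ, ne_bot_of_le_ne_bot W'.2.1 hW'φ, hφ.1⟩ hWφ
  exact hφ.1 (by rwa [sup_eq_right.mpr hW'φ] at this)

def sumGraphOrderIso (σ : sumGraph F V ≃g sumGraph F V) :
    {W : Submodule F V // W ≠ ⊥ ∧ W ≠ ⊤} ≃o
      {W : Submodule F V // W ≠ ⊥ ∧ W ≠ ⊤} where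
  toEquiv := σ.toEquiv
  map_rel_iff' {W W'} := by
    change (σ W).1 ≤ (σ W').1 ↔ W.1 ≤ W'.1
    rw [sumGraph_le_iff_forall_adj, sumGraph_le_iff_forall_adj, σ.surjective.forall]
    simp only [σ.map_adj_iff]

lemma Module.Basis.repr_add_sum_Ioi {ι : Type*} [LinearOrder ι] [LocallyFiniteOrderTop ι]
    (e : Basis ι F V) (i : ι) (c : ι → F) (k : ι) :
    e.repr (e i + ∑ j ∈ Finset.Ioi i, c j • e j) k =
      if k = i then 1 else if i < k then c k else 0 := by
  rcases lt_trichotomy k i with hk | rfl | hk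
  · simp [Finsupp.single_apply, hk.ne, hk.not_gt]
  · simp [Finsupp.single_apply]
  · simp [Finsupp.single_apply, hk, hk.ne']

section Automorphism

variable {σ : sumGraph F V ≃g sumGraph F V}

lemma sumGraph_iso_le_iff {W W' : {W : Submodule F V // W ≠ ⊥ ∧ W ≠ ⊤}} :
    (σ W).1 ≤ (σ W').1 ↔ W.1 ≤ W'.1 :=
  (sumGraphOrderIso σ).le_iff_le

lemma mem_sumGraph_iso_iff {x : V} (hx : ∀ h, (σ ⟨span F {x}, h⟩).1 = span F {x})
    (W : {W : Submodule F V // W ≠ ⊥ ∧ W ≠ ⊤}) : x ∈ (σ W).1 ↔ x ∈ W.1 := by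
  simp_rw [← span_singleton_le_iff_mem]
  by_cases h : span F {x} ≠ ⊥ ∧ span F {x} ≠ ⊤
  · simpa only [hx h] using sumGraph_iso_le_iff (σ := σ) (W := ⟨_, h⟩) (W' := W)
  · rcases not_and_or.mp h with h | h <;> rw [not_not] at h
    · simp [h]
    · simpa only [h, top_le_iff] using iff_of_false (σ W).2.2 W.2.2

lemma exists_sumGraph_iso_eq_span_singleton {v : V} (hv : v ≠ 0) (h) :
    ∃ w ≠ 0, (σ ⟨span F {v}, h⟩).1 = span F {w} :=
  (atom_iff_nonzero_span _).1 <| isMin_iff_isAtom_val.1 <|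
    (sumGraphOrderIso σ).isMin_apply.2 <| isMin_iff_isAtom_val.2 (nonzero_span_atom v hv)

lemma isCoatom_sumGraph_iso {W : {W : Submodule F V // W ≠ ⊥ ∧ W ≠ ⊤}}
    (hW : IsCoatom W.1) :
    IsCoatom (σ W).1 :=
  isMax_iff_isCoatom_val.1 <| (sumGraphOrderIso σ).isMax_apply.2 <| isMax_iff_isCoatom_val.2 hW

variable {ι : Type*} {e : Basis ι F V}

lemma exists_sumGraph_iso_pencilHyperplane_eq
    (hfix : ∀ k h, (σ ⟨span F {e k}, h⟩).1 = span F {e k}) {i j : ι} (hij : i ≠ j)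
    (a : F) :
    ∃ b, (b = 0 ↔ a = 0) ∧
      ∀ h, (σ ⟨pencilHyperplane e i j a, h⟩).1 = pencilHyperplane e i j b := by
  let P : {W : Submodule F V // W ≠ ⊥ ∧ W ≠ ⊤} :=
    ⟨pencilHyperplane e i j a, pencilHyperplane_ne_bot a hij,
      (isCoatom_pencilHyperplane a hij).1⟩
  have hmem (k : ι) : e k ∈ (σ P).1 ↔ e k ∈ P.1 := mem_sumGraph_iso_iff (hfix k) P
  have hσP : IsCoatom (σ P).1 := isCoatom_sumGraph_iso (isCoatom_pencilHyperplane a hij)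
  obtain ⟨b, hb⟩ := hσP.exists_eq_pencilHyperplane hij
    (fun k hki hkj => (hmem k).2 (basis_mem_pencilHyperplane_of_ne a hki hkj))
    (fun h => basis_notMem_pencilHyperplane a hij ((hmem j).1 h))
  refine ⟨b, ?_, fun _ => hb⟩
  rw [← basis_mem_pencilHyperplane_iff (e := e) (b := b) hij, ← hb, hmem i,
    basis_mem_pencilHyperplane_iff hij]

lemma exists_forall_sumGraph_iso_pencilHyperplane_eq
    (hfix : ∀ k h, (σ ⟨span F {e k}, h⟩).1 = span F {e k}) :
    ∃ f : ι → ι → F → F, ∀ i j, i ≠ j → ∀ a, (f i j a = 0 ↔ a = 0) ∧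
      ∀ h, (σ ⟨pencilHyperplane e i j a, h⟩).1 = pencilHyperplane e i j (f i j a) := by
  classical
  have (i j : ι) (a : F) : ∃ b, i ≠ j → (b = 0 ↔ a = 0) ∧
      ∀ h, (σ ⟨pencilHyperplane e i j a, h⟩).1 = pencilHyperplane e i j b :=
    if hij : i = j then ⟨a, fun h => (h hij).elim⟩
    else (exists_sumGraph_iso_pencilHyperplane_eq hfix hij a).imp fun _ hb _ => hb
  choose f hf using this
  exact ⟨f, fun i j hij a => hf i j a hij⟩

lemma sumGraph_iso_span_singleton_eq {f : ι → ι → F → F}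
    (hf : ∀ i j, i ≠ j → ∀ a h,
      (σ ⟨pencilHyperplane e i j a, h⟩).1 = pencilHyperplane e i j (f i j a))
    {i : ι} {v u : V} (hvi : e.repr v i = 1) (hui : e.repr u i = 1)
    (huv : ∀ j ≠ i, e.repr u j = f i j (e.repr v j)) (h) :
    (σ ⟨span F {v}, h⟩).1 = span F {u} := by
  obtain ⟨w, hw0, hw⟩ := exists_sumGraph_iso_eq_span_singleton (σ := σ)
    (fun hv => by simp [hv] at hvi) h
  have hwu : w = e.repr w i • u := by
    refine e.repr.injective (Finsupp.ext fun j => ?_)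
    by_cases hji : j = i
    · simp [hji, hui]
    have hvP : v ∈ pencilHyperplane e i j (e.repr v j) := by
      rw [mem_pencilHyperplane, hvi, mul_one]
    have hP := pencilHyperplane_ne_bot (e := e) (e.repr v j) (Ne.symm hji)
    have := (sumGraph_iso_le_iff (σ := σ) (W := ⟨_, h⟩)
      (W' := ⟨_, hP, (isCoatom_pencilHyperplane _ (Ne.symm hji)).1⟩)).2
      (span_singleton_le_iff_mem _ _ |>.2 hvP)
    rw [hw, hf i j (Ne.symm hji), span_singleton_le_iff_mem, mem_pencilHyperplane] at this
    simp [this, huv j hji, mul_comm]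
  have hwi : e.repr w i ≠ 0 := fun hwi => hw0 (by rw [hwu, hwi, zero_smul])
  rw [hw, hwu, span_singleton_smul_eq (IsUnit.mk0 _ hwi)]

end Automorphism

end Field

theorem stmt_10_general (F V : Type*) [Field F] [AddCommGroup V] [Module F V]
    (n : ℕ)
    (e : Module.Basis (Fin n) F V)
    (σ : sumGraph F V ≃g sumGraph F V)
    (hfix : ∀ (i : Fin n) (h : Submodule.span F {e i} ≠ ⊥ ∧ Submodule.span F {e i} ≠ ⊤),
      (σ ⟨Submodule.span F {e i}, h⟩).1 = Submodule.span F {e i}) :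
    ∃ f : Fin n → Fin n → F → F,
      (∀ i j : Fin n, i < j → ∀ a : F, f i j a = 0 ↔ a = 0) ∧
      (∀ (i : Fin n) (a : Fin n → F)
        (h : Submodule.span F {e i + ∑ j ∈ Finset.Ioi i, a j • e j} ≠ ⊥ ∧
             Submodule.span F {e i + ∑ j ∈ Finset.Ioi i, a j • e j} ≠ ⊤),
        (σ ⟨Submodule.span F {e i + ∑ j ∈ Finset.Ioi i, a j • e j}, h⟩).1 =
          Submodule.span F {e i + ∑ j ∈ Finset.Ioi i, f i j (a j) • e j}) := by
  obtain ⟨f, hf⟩ := exists_forall_sumGraph_iso_pencilHyperplane_eq hfix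
  refine ⟨f, fun i j hij a => (hf i j hij.ne a).1, fun i a h => ?_⟩
  refine sumGraph_iso_span_singleton_eq (fun i j hij a => (hf i j hij a).2) (i := i) ?_ ?_
    (fun j hji => ?_) h
  · rw [e.repr_add_sum_Ioi, if_pos rfl]
  · rw [e.repr_add_sum_Ioi, if_pos rfl]
  rw [e.repr_add_sum_Ioi, e.repr_add_sum_Ioi, if_neg hji, if_neg hji]
  split_ifs
  · rfl
  · exact ((hf i j hji.symm 0).1.mpr rfl).symm

/-- Claim 2: if the automorphism `σ` fixes every `⟨eᵢ⟩`, then there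
are functions `f_{ij} : F → F` (for `i < j`), vanishing exactly at `0`, such that
`σ(⟨eᵢ + ∑_{j>i} aⱼeⱼ⟩) = ⟨eᵢ + ∑_{j>i} f_{ij}(aⱼ)eⱼ⟩` for all `i` and all scalars. -/
theorem stmt_10 (F V : Type*) [Field F] [Fintype F] [AddCommGroup V] [Module F V]
    [FiniteDimensional F V] (n : ℕ) (hn : 3 ≤ n) (hdim : Module.finrank F V = n)
    (e : Module.Basis (Fin n) F V)
    (σ : sumGraph F V ≃g sumGraph F V)
    (hfix : ∀ (i : Fin n) (h : Submodule.span F {e i} ≠ ⊥ ∧ Submodule.span F {e i} ≠ ⊤),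
      (σ ⟨Submodule.span F {e i}, h⟩).1 = Submodule.span F {e i}) :
    ∃ f : Fin n → Fin n → F → F,
      (∀ i j : Fin n, i < j → ∀ a : F, f i j a = 0 ↔ a = 0) ∧
      (∀ (i : Fin n) (a : Fin n → F)
        (h : Submodule.span F {e i + ∑ j ∈ Finset.Ioi i, a j • e j} ≠ ⊥ ∧
             Submodule.span F {e i + ∑ j ∈ Finset.Ioi i, a j • e j} ≠ ⊤),
        (σ ⟨Submodule.span F {e i + ∑ j ∈ Finset.Ioi i, a j • e j}, h⟩).1 =
          Submodule.span F {e i + ∑ j ∈ Finset.Ioi i, f i j (a j) • e j}) :=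
  stmt_10_general F V n e σ hfix
end

section
/- Let σ be an automorphism of G(V) such that σ(⟨e_i⟩) = ⟨e_i⟩ for every 1 ≤ i ≤ n, and let f_{ij} : F_q → F_q (for 1 ≤ i < j ≤ n) be functions such that for every 1 ≤ i ≤ n and all scalars a_{i+1}, …, a_n ∈ F_q, σ(⟨e_i + ∑_{j=i+1}^n a_j e_j⟩) = ⟨e_i + ∑_{j=i+1}^n f_{ij}(a_j) e_j⟩. Then for all 2 ≤ i < j ≤ n and all a, b ∈ F_q, f_{1j}(ab) = f_{1i}(a) · f_{ij}(b). -/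
open Module Submodule

section LinearAlgebra

theorem Submodule.span_singleton_ne_top_of_one_lt_finrank {K V : Type*} [DivisionRing K]
    [AddCommGroup V] [Module K V] (h : 1 < finrank K V) (v : V) : span K {v} ≠ ⊤ := by
  intro hv
  have hle := finrank_span_le_card (R := K) ({v} : Set V)
  rw [hv, finrank_top] at hle
  simp only [Set.toFinset_singleton, Finset.card_singleton] at hle
  omega

theorem Submodule.isCoatom_of_span_singleton_sup_eq_top {K V : Type*} [DivisionRing K]
    [AddCommGroup V] [Module K V] {W : Submodule K V} {x : V}
    (hW : W ≠ ⊤) (h : span K {x} ⊔ W = ⊤) : IsCoatom W := by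
  have hx : x ∉ W := fun hx => hW <| by
    rwa [sup_eq_right.2 ((span_singleton_le_iff_mem x W).2 hx)] at h
  exact covBy_top_iff.1 (h ▸ covBy_span_singleton_sup hx)

theorem LinearMap.ker_le_of_basis_sub_smul_mem {ι R M : Type*} [CommRing R] [AddCommGroup M]
    [Module R M] (b : Basis ι R M) (φ : M →ₗ[R] R) (x : M) {K : Submodule R M}
    (h : ∀ k, b k - φ (b k) • x ∈ K) : LinearMap.ker φ ≤ K := by
  set P : M →ₗ[R] M := LinearMap.id - φ.smulRight x
  have hP : ⊤ ≤ K.comap P := by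
    rw [← b.span_eq, span_le]
    rintro _ ⟨k, rfl⟩
    exact h k
  intro v hv
  simpa [P, LinearMap.mem_ker.1 hv] using hP (mem_top (x := v))

variable {F V : Type*} [Field F] [AddCommGroup V] [Module F V]

namespace Module.Basis

variable {ι : Type*} (e : Basis ι F V)

noncomputable def coordHyperplane (i j : ι) (c : F) : Submodule F V :=
  LinearMap.ker (e.coord j - c • e.coord i)

variable {e}

theorem mem_coordHyperplane {i j : ι} {c : F} {v : V} :
    v ∈ e.coordHyperplane i j c ↔ e.repr v j = c * e.repr v i := by
  simp [coordHyperplane, sub_eq_zero]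

theorem basis_mem_coordHyperplane {i j k : ι} (hki : k ≠ i) (hkj : k ≠ j) (c : F) :
    e k ∈ e.coordHyperplane i j c := by
  simp [mem_coordHyperplane, hki, hkj]

theorem basis_notMem_coordHyperplane {i j : ι} (hij : i ≠ j) (c : F) :
    e j ∉ e.coordHyperplane i j c := by
  simp [mem_coordHyperplane, hij]

theorem span_singleton_sup_coordHyperplane {i j : ι} (hij : i ≠ j) (c : F) :
    span F {e j} ⊔ e.coordHyperplane i j c = ⊤ :=
  LinearMap.span_singleton_sup_ker_eq_top _ (by simp [hij.symm])

theorem isCoatom_coordHyperplane {i j : ι} (hij : i ≠ j) (c : F) :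
    IsCoatom (e.coordHyperplane i j c) :=
  isCoatom_of_span_singleton_sup_eq_top
    (fun h => basis_notMem_coordHyperplane hij c (h ▸ mem_top))
    (span_singleton_sup_coordHyperplane hij c)

theorem coordHyperplane_eq {i j : ι} (hij : i ≠ j) {c : F} {K : Submodule F V} (hK : K ≠ ⊤)
    (he : ∀ k, k ≠ i → k ≠ j → e k ∈ K) (hi : e i + c • e j ∈ K) :
    e.coordHyperplane i j c = K := by
  refine (((e.isCoatom_coordHyperplane hij c).le_iff.1 ?_).resolve_left hK).symm
  refine LinearMap.ker_le_of_basis_sub_smul_mem e _ (e j) fun k => ?_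
  by_cases hki : k = i
  · subst hki
    simpa [hij, hij.symm] using hi
  by_cases hkj : k = j
  · simp [hkj, hij.symm]
  · simpa [hki, hkj, Ne.symm hki, Ne.symm hkj] using he k hki hkj

section Unitriangular

variable [LinearOrder ι] [LocallyFiniteOrderTop ι] (e : Basis ι F V) (i : ι) (c : ι → F)

theorem repr_add_sum_Ioi_self : e.repr (e i + ∑ m ∈ Finset.Ioi i, c m • e m) i = 1 := by
  simp [Finsupp.single_apply]

theorem repr_add_sum_Ioi_of_lt {k : ι} (hik : i < k) :
    e.repr (e i + ∑ m ∈ Finset.Ioi i, c m • e m) k = c k := by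
  simp [Finsupp.single_apply, hik, hik.ne]

theorem add_sum_Ioi_ne_zero : e i + ∑ m ∈ Finset.Ioi i, c m • e m ≠ 0 := fun h => by
  simpa [h] using repr_add_sum_Ioi_self e i c

variable {e i c}

theorem add_smul_mem_of_add_sum_Ioi_mem {j : ι} (hij : i < j) {K : Submodule F V}
    (he : ∀ k, k ≠ i → k ≠ j → e k ∈ K) (hw : e i + ∑ m ∈ Finset.Ioi i, c m • e m ∈ K) :
    e i + c j • e j ∈ K := by
  rw [← Finset.add_sum_erase _ _ (Finset.mem_Ioi.2 hij), ← add_assoc] at hw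
  refine (K.add_mem_iff_left (K.sum_mem fun m hm => K.smul_mem _ (he m ?_ ?_))).1 hw
  · exact (Finset.mem_Ioi.1 (Finset.mem_of_mem_erase hm)).ne'
  · exact Finset.ne_of_mem_erase hm

end Unitriangular

end Module.Basis

end LinearAlgebra

namespace sumGraph

variable {F V : Type*} [Field F] [AddCommGroup V] [Module F V]
  {W₁ W₂ : {W : Submodule F V // W ≠ ⊥ ∧ W ≠ ⊤}}

theorem adj_iff_s11 : (sumGraph F V).Adj W₁ W₂ ↔ W₁.1 ⊔ W₂.1 = ⊤ := by
  refine ⟨And.right, fun h => ⟨?_, h⟩⟩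
  rintro rfl
  exact W₁.2.2 (by rwa [sup_idem] at h)

theorem sup_map_eq_top_iff (σ : sumGraph F V ≃g sumGraph F V) :
    (σ W₁).1 ⊔ (σ W₂).1 = ⊤ ↔ W₁.1 ⊔ W₂.1 = ⊤ := by
  rw [← adj_iff_s11, ← adj_iff_s11, σ.map_adj_iff]

theorem isCoatom_map (σ : sumGraph F V ≃g sumGraph F V) {x : V}
    (hx : (σ W₁).1 = span F {x}) (h : W₁.1 ⊔ W₂.1 = ⊤) : IsCoatom (σ W₂).1 :=
  isCoatom_of_span_singleton_sup_eq_top (σ W₂).2.2 (hx ▸ (sup_map_eq_top_iff σ).2 h)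

theorem map_le_map_of_le (σ : sumGraph F V ≃g sumGraph F V) (hle : W₁.1 ≤ W₂.1)
    (hW₂ : IsCoatom (σ W₂).1) : (σ W₁).1 ≤ (σ W₂).1 := by
  have hsup : (σ W₂).1 ⊔ (σ W₁).1 ≠ ⊤ := by
    rw [ne_eq, sup_map_eq_top_iff, sup_eq_left.2 hle]
    exact W₂.2.2
  exact sup_eq_left.1 ((hW₂.le_iff.1 le_sup_left).resolve_left hsup)

end sumGraph

/-- Claim 3(i): if the automorphism `σ` fixes every `⟨eᵢ⟩` and the
functions `f_{ij}` describe the action of `σ` as in Claim 2, then for all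
`1 < i < j` (indices `0`-based: `0 < i < j`) and all `a, b`,
`f_{1j}(ab) = f_{1i}(a)·f_{ij}(b)`. -/
theorem stmt_11 (F V : Type*) [Field F] [AddCommGroup V] [Module F V]
    (n : ℕ) (hn : 3 ≤ n)
    (e : Module.Basis (Fin n) F V)
    (σ : sumGraph F V ≃g sumGraph F V)
    (hfix : ∀ (i : Fin n) (h : Submodule.span F {e i} ≠ ⊥ ∧ Submodule.span F {e i} ≠ ⊤),
      (σ ⟨Submodule.span F {e i}, h⟩).1 = Submodule.span F {e i})
    (f : Fin n → Fin n → F → F)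
    (hf : ∀ (i : Fin n) (a : Fin n → F)
      (h : Submodule.span F {e i + ∑ j ∈ Finset.Ioi i, a j • e j} ≠ ⊥ ∧
           Submodule.span F {e i + ∑ j ∈ Finset.Ioi i, a j • e j} ≠ ⊤),
      (σ ⟨Submodule.span F {e i + ∑ j ∈ Finset.Ioi i, a j • e j}, h⟩).1 =
        Submodule.span F {e i + ∑ j ∈ Finset.Ioi i, f i j (a j) • e j}) :
    ∀ i j : Fin n, (⟨0, by omega⟩ : Fin n) < i → i < j → ∀ a b : F,
      f ⟨0, by omega⟩ j (a * b) = f ⟨0, by omega⟩ i a * f i j b := by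
  intro i j hi hij a b
  have hrank : 1 < finrank F V := by rw [finrank_eq_card_basis e, Fintype.card_fin]; omega
  have hline (v : V) (hv : v ≠ 0) : span F {v} ≠ ⊥ ∧ span F {v} ≠ ⊤ :=
    ⟨by simpa using hv, span_singleton_ne_top_of_one_lt_finrank hrank v⟩
  have hH : e.coordHyperplane i j b ≠ ⊥ ∧ e.coordHyperplane i j b ≠ ⊤ :=
    ⟨(Submodule.ne_bot_iff _).2
      ⟨_, e.basis_mem_coordHyperplane hi.ne (hi.trans hij).ne b, e.ne_zero _⟩,
      (e.isCoatom_coordHyperplane hij.ne b).1⟩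
  set H : {W : Submodule F V // W ≠ ⊥ ∧ W ≠ ⊤} := ⟨_, hH⟩
  have hK : IsCoatom (σ H).1 := sumGraph.isCoatom_map σ (hfix j (hline _ (e.ne_zero j)))
    (e.span_singleton_sup_coordHyperplane hij.ne b)
  have hmem (v w : V) (hv : v ≠ 0) (hvH : v ∈ H.1)
      (hw : (σ ⟨span F {v}, hline v hv⟩).1 = span F {w}) : w ∈ (σ H).1 := by
    rw [← span_singleton_le_iff_mem, ← hw]
    exact sumGraph.map_le_map_of_le σ ((span_singleton_le_iff_mem _ _).2 hvH) hK
  have he (k : Fin n) (hki : k ≠ i) (hkj : k ≠ j) : e k ∈ (σ H).1 :=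
    hmem _ _ (e.ne_zero k) (e.basis_mem_coordHyperplane hki hkj b) (hfix k _)
  have hwi := hmem _ _ (e.add_sum_Ioi_ne_zero i _) (by
    rw [Basis.mem_coordHyperplane, Basis.repr_add_sum_Ioi_self,
      Basis.repr_add_sum_Ioi_of_lt _ _ _ hij, mul_one])
    (hf i (fun _ => b) _)
  have hKeq : e.coordHyperplane i j (f i j b) = (σ H).1 :=
    e.coordHyperplane_eq hij.ne (σ H).2.2 he (Basis.add_smul_mem_of_add_sum_Ioi_mem hij he hwi)
  set c₀ : Fin n → F := fun m => if m = i then a else a * b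
  have hw₀ := hmem _ _ (e.add_sum_Ioi_ne_zero _ _) (by
    rw [Basis.mem_coordHyperplane, Basis.repr_add_sum_Ioi_of_lt _ _ _ hi,
      Basis.repr_add_sum_Ioi_of_lt _ _ _ (hi.trans hij)]
    simp [c₀, hij.ne', mul_comm]) (hf _ c₀ _)
  rw [← hKeq, Basis.mem_coordHyperplane, Basis.repr_add_sum_Ioi_of_lt _ _ _ hi,
    Basis.repr_add_sum_Ioi_of_lt _ _ _ (hi.trans hij)] at hw₀
  simpa [c₀, hij.ne', mul_comm] using hw₀
end

section
/- Let σ be an automorphism of G(V) such that σ(⟨α⟩) = ⟨α⟩ for every nonzero vector α ∈ V, i.e. σ fixes every 1-dimensional subspace of V. Then σ(W) = W for every vertex W of G(V); that is, σ is the identity automorphism. -/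
namespace Submodule

variable {F V : Type*} [Field F] [AddCommGroup V] [Module F V]

theorem exists_isCoatom_le_of_notMem {W : Submodule F V} {x : V} (hx : x ∉ W) :
    ∃ H : Submodule F V, IsCoatom H ∧ W ≤ H ∧ x ∉ H := by
  obtain ⟨f, hfx, hWf⟩ := W.exists_dual_map_eq_bot_of_notMem hx inferInstance
  have hf : f ≠ 0 := fun h => hfx (by simp [h])
  exact ⟨LinearMap.ker f, LinearMap.isCoatom_ker_of_surjective (LinearMap.surjective hf),
    LinearMap.le_ker_iff_map.mpr hWf, hfx⟩

theorem le_of_forall_isCoatom {W W' : Submodule F V}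
    (h : ∀ H, IsCoatom H → W ≤ H → W' ≤ H) : W' ≤ W := by
  intro x hx
  by_contra hxW
  obtain ⟨H, hH, hWH, hxH⟩ := exists_isCoatom_le_of_notMem hxW
  exact hxH (h H hH hWH hx)

end Submodule

open Submodule

namespace sumGraph

variable {F V : Type*} [Field F] [AddCommGroup V] [Module F V]

abbrev Vertex (F V : Type*) [Field F] [AddCommGroup V] [Module F V] :=
  {W : Submodule F V // W ≠ ⊥ ∧ W ≠ ⊤}

theorem span_singleton_ne_top (W : Vertex F V) {x : V} (hx : x ≠ 0) : span F {x} ≠ ⊤ := fun h =>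
  W.2.1 ((nonzero_span_atom x hx).lt_iff.mp (by rw [h]; exact W.2.2.lt_top))

theorem not_adj_of_le_s14 {W₁ W₂ : Vertex F V} (h : W₁.1 ≤ W₂.1) :
    ¬ (sumGraph F V).Adj W₁ W₂ := fun hadj =>
  W₂.2.2 (by rw [← sup_eq_right.mpr h]; exact hadj.2)

theorem adj_iff_of_isCoatom {H : Vertex F V} (hH : IsCoatom H.1) (W : Vertex F V) :
    (sumGraph F V).Adj H W ↔ ¬ W.1 ≤ H.1 :=
  ⟨fun hadj hle => not_adj_of_le_s14 hle hadj.symm,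
    fun hle => ⟨fun h => hle (h ▸ le_rfl), codisjoint_iff.mp (hH.not_le_iff_codisjoint.mp hle)⟩⟩

def FixesLines (σ : sumGraph F V ≃g sumGraph F V) : Prop :=
  ∀ (α : V), α ≠ 0 →
    ∀ (h : span F {α} ≠ ⊥ ∧ span F {α} ≠ ⊤), (σ ⟨span F {α}, h⟩).1 = span F {α}

variable {σ : sumGraph F V ≃g sumGraph F V}

theorem FixesLines.map_eq_of_isCoatom (hfix : FixesLines σ) {H : Vertex F V}
    (hH : IsCoatom H.1) : σ H = H := by
  have line_adj_map : ∀ x ∉ H.1, ∃ h, (sumGraph F V).Adj ⟨span F {x}, h⟩ (σ H) := by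
    intro x hxH
    have hx : x ≠ 0 := fun h => hxH (h ▸ H.1.zero_mem)
    let L : Vertex F V := ⟨span F {x}, by simpa using hx, span_singleton_ne_top H hx⟩
    have hL : σ L = L := Subtype.ext (hfix x hx L.2)
    have hadj : (sumGraph F V).Adj H L :=
      (adj_iff_of_isCoatom hH L).mpr (by simpa [L] using hxH)
    refine ⟨L.2, show (sumGraph F V).Adj L (σ H) from ?_⟩
    rw [← hL]
    exact σ.map_adj_iff.mpr hadj.symm
  have hle : (σ H).1 ≤ H.1 := fun x hx => by
    by_contra hxH
    obtain ⟨_, hadj⟩ := line_adj_map x hxH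
    exact not_adj_of_le_s14 ((span_singleton_le_iff_mem x _).mpr hx) hadj
  obtain ⟨β, -, hβH⟩ := SetLike.exists_of_lt hH.lt_top
  obtain ⟨_, hadj⟩ := line_adj_map β hβH
  have hdisj : span F {β} ⊓ H.1 = ⊥ := (disjoint_span_singleton_of_notMem hβH).symm.eq_bot
  refine Subtype.ext (le_antisymm hle ?_)
  calc H.1 = (σ H).1 ⊔ span F {β} ⊓ H.1 := by
        rw [← sup_inf_assoc_of_le _ hle, sup_comm, hadj.2, top_inf_eq]
    _ ≤ (σ H).1 := by rw [hdisj, sup_bot_eq]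

theorem FixesLines.map_le_iff (hfix : FixesLines σ) {H : Submodule F V} (hH : IsCoatom H)
    (hH₀ : H ≠ ⊥) (W : Vertex F V) : (σ W).1 ≤ H ↔ W.1 ≤ H := by
  let H' : Vertex F V := ⟨H, hH₀, hH.ne_top⟩
  rw [← not_iff_not, ← adj_iff_of_isCoatom (H := H') hH, ← adj_iff_of_isCoatom (H := H') hH]
  conv_lhs => rw [← hfix.map_eq_of_isCoatom (H := H') hH]
  exact σ.map_adj_iff

end sumGraph

theorem stmt_14_general (F V : Type*) [Field F] [AddCommGroup V] [Module F V]
    (σ : sumGraph F V ≃g sumGraph F V)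
    (hfix : ∀ (α : V), α ≠ 0 →
      ∀ (h : Submodule.span F {α} ≠ ⊥ ∧ Submodule.span F {α} ≠ ⊤),
        (σ ⟨Submodule.span F {α}, h⟩).1 = Submodule.span F {α}) :
    ∀ W : {W : Submodule F V // W ≠ ⊥ ∧ W ≠ ⊤}, σ W = W := by
  intro W
  refine Subtype.ext (le_antisymm ?_ ?_) <;> apply Submodule.le_of_forall_isCoatom <;>
    intro H hH hle
  · exact (sumGraph.FixesLines.map_le_iff hfix hH (ne_bot_of_le_ne_bot W.2.1 hle) W).mpr hle
  · exact (sumGraph.FixesLines.map_le_iff hfix hH (ne_bot_of_le_ne_bot (σ W).2.1 hle) W).mp hle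

/-- an automorphism of `G(V)` fixing every `1`-dimensional subspace
fixes every vertex, i.e. is the identity. -/
theorem stmt_14 (F V : Type*) [Field F] [Fintype F] [AddCommGroup V] [Module F V]
    [FiniteDimensional F V] (n : ℕ) (hn : 3 ≤ n) (hdim : Module.finrank F V = n)
    (σ : sumGraph F V ≃g sumGraph F V)
    (hfix : ∀ (α : V), α ≠ 0 →
      ∀ (h : Submodule.span F {α} ≠ ⊥ ∧ Submodule.span F {α} ≠ ⊤),
        (σ ⟨Submodule.span F {α}, h⟩).1 = Submodule.span F {α}) :
    ∀ W : {W : Submodule F V // W ≠ ⊥ ∧ W ≠ ⊤}, σ W = W :=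
  stmt_14_general F V σ hfix
end

section
/- Let f₁, f₂ be field automorphisms of F_q and let g₁, g₂ : V → V be bijections with g_k additive and g_k(a·v) = f_k(a)·g_k(v) for all a ∈ F_q, v ∈ V (k = 1, 2). If g₁(W) = g₂(W) for every nontrivial proper subspace W of V, then f₁ = f₂ and there exists a nonzero scalar c ∈ F_q such that g₂(v) = c·g₁(v) for all v ∈ V. -/
/-!
The additive bijection `g₁⁻¹ ∘ g₂` maps every line `F ∙ v` into itself. In dimension at least
two such an additive map is a homothety `v ↦ c • v`: comparing its scalars on `v`, `w` and
`v + w` for independent `v, w` forces them to agree. Hence `g₂ = f₁ c • g₁`, and evaluating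
both semilinearity rules on `g₂ (a • u)` gives `f₁ = f₂`.
-/

open Submodule

section

variable {K V : Type*} [DivisionRing K] [AddCommGroup V] [Module K V]

theorem Submodule.span_singleton_ne_top_of_one_lt_rank (h : 1 < Module.rank K V) (u : V) :
    K ∙ u ≠ ⊤ := by
  intro htop
  have : Module.rank K V ≤ 1 := by
    rw [← rank_top, ← htop]
    simpa using rank_span_le (R := K) ({u} : Set V)
  exact h.not_ge this

theorem AddMonoidHom.smul_eq_of_notMem_span_singleton {φ : V →+ V} {v w : V} {a b : K}
    (hφ : ∀ x, φ x ∈ K ∙ x) (hv : φ v = a • v) (hw : φ w = b • w) (hv0 : v ≠ 0)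
    (hwv : w ∉ K ∙ v) : a = b := by
  have hvw : LinearIndependent K ![v, w] :=
    (LinearIndependent.pair_iff' hv0).mpr fun c hc => hwv (mem_span_singleton.mpr ⟨c, hc⟩)
  obtain ⟨c, hc⟩ := mem_span_singleton.mp (hφ (v + w))
  have hsum : (c - a) • v + (c - b) • w = 0 := by
    rw [sub_smul, sub_smul, sub_add_sub_comm, ← smul_add, hc, map_add, hv, hw, sub_self]
  obtain ⟨hca, hcb⟩ := LinearIndependent.pair_iff.mp hvw _ _ hsum
  exact (sub_eq_zero.mp hca).symm.trans (sub_eq_zero.mp hcb)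

/-- In dimension one this fails: complex conjugation preserves the only line of `ℂ`. -/
theorem AddMonoidHom.exists_eq_smul_of_forall_mem_span_singleton (h : 1 < Module.rank K V)
    (φ : V →+ V) (hφ : ∀ x, φ x ∈ K ∙ x) : ∃ c : K, ∀ x, φ x = c • x := by
  choose s hs using fun x => mem_span_singleton.mp (hφ x)
  have hne : ∀ x, K ∙ x ≠ ⊤ := span_singleton_ne_top_of_one_lt_rank h
  have : Nontrivial V := rank_pos_iff_nontrivial.mp (zero_lt_one.trans h)
  obtain ⟨u, hu⟩ := exists_ne (0 : V)
  refine ⟨s u, fun x => ?_⟩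
  rcases eq_or_ne x 0 with rfl | hx
  · simp
  rw [← hs x]
  congr 1
  by_cases hxu : x ∈ K ∙ u
  · obtain ⟨w, hw⟩ : ∃ w, w ∉ K ∙ u := by simpa [eq_top_iff'] using hne u
    have hwx : w ∉ K ∙ x := fun hwx => hw ((span_singleton_le_iff_mem x _).mpr hxu hwx)
    have hxw := smul_eq_of_notMem_span_singleton hφ (hs x).symm (hs w).symm hx hwx
    have huw := smul_eq_of_notMem_span_singleton hφ (hs u).symm (hs w).symm hu hw
    exact hxw.trans huw.symm
  · exact (smul_eq_of_notMem_span_singleton hφ (hs u).symm (hs x).symm hu hxu).symm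

end

theorem stmt_17_general (F V : Type*) [Field F] [AddCommGroup V] [Module F V]
    (n : ℕ) (hn : 3 ≤ n) (hdim : Module.finrank F V = n)
    (f₁ f₂ : F ≃+* F) (g₁ g₂ : V ≃+ V)
    (hg₁ : ∀ (a : F) (v : V), g₁ (a • v) = f₁ a • g₁ v)
    (hg₂ : ∀ (a : F) (v : V), g₂ (a • v) = f₂ a • g₂ v)
    (heq : ∀ W : Submodule F V, W ≠ ⊥ → W ≠ ⊤ →
      g₁ '' (W : Set V) = g₂ '' (W : Set V)) :
    f₁ = f₂ ∧ ∃ c : F, c ≠ 0 ∧ ∀ v : V, g₂ v = c • g₁ v := by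
  have hrank : 1 < Module.rank F V := Module.one_lt_rank_of_one_lt_finrank (by omega)
  have : Nontrivial V := rank_pos_iff_nontrivial.mp (zero_lt_one.trans hrank)
  have hline : ∀ v, g₁.symm (g₂ v) ∈ F ∙ v := by
    intro v
    rcases eq_or_ne v 0 with rfl | hv
    · simp
    have hL := heq (F ∙ v) (by simpa using hv) (span_singleton_ne_top_of_one_lt_rank hrank v)
    obtain ⟨w, hw, hwv⟩ := hL ▸ Set.mem_image_of_mem g₂ (mem_span_singleton_self v)
    rwa [← hwv, g₁.symm_apply_apply]
  obtain ⟨c, hc⟩ := AddMonoidHom.exists_eq_smul_of_forall_mem_span_singleton hrank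
    (g₂.trans g₁.symm).toAddMonoidHom hline
  have hg : ∀ v, g₂ v = f₁ c • g₁ v := fun v => by
    rw [← hg₁, ← hc, AddEquiv.coe_toAddMonoidHom, AddEquiv.trans_apply, g₁.apply_symm_apply]
  obtain ⟨u, hu⟩ := exists_ne (0 : V)
  have hgu : g₁ u ≠ 0 := (map_ne_zero_iff g₁ g₁.injective).mpr hu
  have hc0 : f₁ c ≠ 0 := fun h0 => hu (g₂.injective (by rw [hg, h0, zero_smul, map_zero]))
  refine ⟨RingEquiv.ext fun a => ?_, f₁ c, hc0, hg⟩
  have h := smul_left_injective F hgu <| show (f₁ c * f₁ a) • g₁ u = (f₂ a * f₁ c) • g₁ u by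
    rw [mul_smul, mul_smul, ← hg, ← hg₁, ← hg₂, hg]
  exact mul_left_cancel₀ hc0 (h.trans (mul_comm _ _))

/-- uniqueness of the decomposition: if two semilinear bijections
`g₁, g₂` of `V` (relative to field automorphisms `f₁, f₂` of `F_q`) induce the same
map on nontrivial proper subspaces, then `f₁ = f₂` and `g₂ = c • g₁` for some
nonzero scalar `c`. -/
theorem stmt_17 (F V : Type*) [Field F] [Fintype F] [AddCommGroup V] [Module F V]
    [FiniteDimensional F V] (n : ℕ) (hn : 3 ≤ n) (hdim : Module.finrank F V = n)
    (f₁ f₂ : F ≃+* F) (g₁ g₂ : V ≃+ V)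
    (hg₁ : ∀ (a : F) (v : V), g₁ (a • v) = f₁ a • g₁ v)
    (hg₂ : ∀ (a : F) (v : V), g₂ (a • v) = f₂ a • g₂ v)
    (heq : ∀ W : Submodule F V, W ≠ ⊥ → W ≠ ⊤ →
      g₁ '' (W : Set V) = g₂ '' (W : Set V)) :
    f₁ = f₂ ∧ ∃ c : F, c ≠ 0 ∧ ∀ v : V, g₂ v = c • g₁ v :=
  stmt_17_general F V n hn hdim f₁ f₂ g₁ g₂ hg₁ hg₂ heq
end
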